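/- Let Γ be a probability measure on X×X whose two marginals both equal π̌, decomposed as Γ(dx,dy) = π̌(dx)P̌(x,dy) with P̌(x,dy) = m(x,y)P(x,dy), M = log m, and suppose Γ(|M|∧∞) is well-defined with Γ(M₋) < ∞. Then for every bounded measurable G on X×X, the log-generalized-principal-eigenvalue functional Λ satisfies Λ(G) ≥ ⟨Γ, G − M⟩; consequently Λ*(Γ) := sup_G (⟨Γ,G⟩ − Λ(G)) ≤ ⟨Γ, M⟩ = H(Γ ∥ π̌ ⊙ P). -/

import Mathlib

/-!
Write `P̌ = m P` for the tilted kernel and `f = G - log m`. Since `π̌` is `P̌`-invariant, the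
expected additive functional `u_T(x) = E^{P̌}_x[Σ_{t<T} f(Φ(t), Φ(t+1))]` has
`∫ u_T dπ̌ = T ⟨Γ, f⟩`. Jensen's inequality for `exp` under `P̌(x, ·)`, followed by the change of
measure `P̌ = m P`, gives `exp u_T ≤ E_x[exp Σ_{t<T} G(Φ(t), Φ(t+1))]` by induction on `T`,
`π̌`-almost everywhere. Taking `T⁻¹ log`, integrating against `π̌` and passing to the limit by
dominated convergence (`G` is bounded) yields `⟨Γ, f⟩ ≤ Λ(G)`; this replaces the ergodic
theorem for `P̌`.
-/

open MeasureTheory ProbabilityTheory Filter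
open scoped ENNReal

/-- The multiplicative iterates
`(expIter P G T) x = E_x[exp(Σ_{t<T} G(Φ(t), Φ(t+1)))]` for the chain with
transition kernel `P` (in `ℝ≥0∞` to avoid integrability side conditions). -/
noncomputable def expIter {X : Type*} [MeasurableSpace X] (P : Kernel X X)
    (G : X × X → ℝ) : ℕ → X → ℝ≥0∞
  | 0 => fun _ => 1
  | T + 1 => fun x =>
      ∫⁻ y, ENNReal.ofReal (Real.exp (G (x, y))) * expIter P G T y ∂(P x)

lemma ofReal_exp_integral_le_lintegral {Y : Type*} [MeasurableSpace Y] (μ : Measure Y)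
    [IsProbabilityMeasure μ] {f : Y → ℝ} (hf : Integrable f μ) :
    ENNReal.ofReal (Real.exp (∫ y, f y ∂μ)) ≤ ∫⁻ y, ENNReal.ofReal (Real.exp (f y)) ∂μ := by
  by_cases hfin : ∫⁻ y, ENNReal.ofReal (Real.exp (f y)) ∂μ = ⊤
  · simp [hfin]
  have hexp : Integrable (fun y => Real.exp (f y)) μ :=
    ⟨Real.continuous_exp.comp_aestronglyMeasurable hf.1, by
      rw [hasFiniteIntegral_iff_ofReal (ae_of_all _ fun _ => (Real.exp_pos _).le)]
      exact lt_top_iff_ne_top.2 hfin⟩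
  rw [← ofReal_integral_eq_lintegral_ofReal hexp (ae_of_all _ fun _ => (Real.exp_pos _).le)]
  exact ENNReal.ofReal_le_ofReal <|
    convexOn_exp.map_integral_le Real.continuous_exp.continuousOn isClosed_univ
      (ae_of_all _ fun _ => Set.mem_univ _) hf hexp

lemma integrable_of_lintegral_ofReal_ne_top {Y : Type*} [MeasurableSpace Y] {μ : Measure Y}
    {f : Y → ℝ} (hf : AEStronglyMeasurable f μ)
    (hpos : ∫⁻ y, ENNReal.ofReal (f y) ∂μ ≠ ⊤) (hneg : ∫⁻ y, ENNReal.ofReal (-f y) ∂μ ≠ ⊤) :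
    Integrable f μ := by
  refine ⟨hf, ?_⟩
  rw [hasFiniteIntegral_iff_norm]
  calc ∫⁻ y, ENNReal.ofReal ‖f y‖ ∂μ
      ≤ ∫⁻ y, ENNReal.ofReal (f y) + ENNReal.ofReal (-f y) ∂μ := by
        refine lintegral_mono fun y => ?_
        rcases le_total 0 (f y) with h | h
        · simp [Real.norm_of_nonneg h]
        · simp [Real.norm_of_nonpos h]
    _ = (∫⁻ y, ENNReal.ofReal (f y) ∂μ) + ∫⁻ y, ENNReal.ofReal (-f y) ∂μ :=
        lintegral_add_left' hf.aemeasurable.ennreal_ofReal _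
    _ < ⊤ := ENNReal.add_lt_top.2 ⟨lt_top_iff_ne_top.2 hpos, lt_top_iff_ne_top.2 hneg⟩

lemma ofReal_mul_ofReal_exp_sub_log_le (t a : ℝ) :
    ENNReal.ofReal t * ENNReal.ofReal (Real.exp (a - Real.log t))
      ≤ ENNReal.ofReal (Real.exp a) := by
  rcases le_or_gt t 0 with ht | ht
  · simp [ENNReal.ofReal_of_nonpos ht]
  · rw [← ENNReal.ofReal_mul ht.le, Real.exp_sub, Real.exp_log ht, mul_div_cancel₀ _ ht.ne']

section expIter

variable {X : Type*} [MeasurableSpace X]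

lemma measurable_expIter (P : Kernel X X) [IsSFiniteKernel P] {G : X × X → ℝ}
    (hG : Measurable G) (T : ℕ) : Measurable (expIter P G T) := by
  induction T with
  | zero => exact measurable_const
  | succ T ih =>
    exact Measurable.lintegral_kernel_prod_right'
      ((Real.measurable_exp.comp hG).ennreal_ofReal.mul (ih.comp measurable_snd))

lemma expIter_mono (P : Kernel X X) {G H : X × X → ℝ} (hGH : G ≤ H) (T : ℕ) :
    expIter P G T ≤ expIter P H T := by
  induction T with
  | zero => exact le_rfl
  | succ T ih =>
    exact fun x => lintegral_mono fun y =>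
      mul_le_mul' (ENNReal.ofReal_le_ofReal (Real.exp_le_exp.2 (hGH _))) (ih y)

lemma expIter_const (P : Kernel X X) [IsMarkovKernel P] (c : ℝ) (T : ℕ) (x : X) :
    expIter P (fun _ => c) T x = ENNReal.ofReal (Real.exp (c * T)) := by
  induction T generalizing x with
  | zero => simp [expIter]
  | succ T ih =>
    simp only [expIter, ih]
    rw [lintegral_const, measure_univ, mul_one, ← ENNReal.ofReal_mul (Real.exp_pos _).le,
      ← Real.exp_add]
    push_cast
    ring_nf

lemma expIter_ne_top (P : Kernel X X) [IsMarkovKernel P] {G : X × X → ℝ} {c : ℝ}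
    (hG : ∀ p, G p ≤ c) (T : ℕ) (x : X) : expIter P G T x ≠ ⊤ :=
  ne_top_of_le_ne_top ENNReal.ofReal_ne_top
    ((expIter_mono P (G := G) (H := fun _ => c) hG T x).trans_eq (expIter_const P c T x))

lemma abs_log_toReal_expIter_le (P : Kernel X X) [IsMarkovKernel P] {G : X × X → ℝ} {c : ℝ}
    (hG : ∀ p, |G p| ≤ c) (T : ℕ) (x : X) :
    |Real.log (expIter P G T x).toReal| ≤ c * T := by
  have hlo := expIter_mono P (fun p => neg_le_of_abs_le (hG p)) T x
  have hhi := expIter_mono P (fun p => le_of_abs_le (hG p)) T x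
  rw [expIter_const] at hlo hhi
  have hlo' := ENNReal.toReal_mono (expIter_ne_top P (fun p => le_of_abs_le (hG p)) T x) hlo
  have hhi' := ENNReal.toReal_mono ENNReal.ofReal_ne_top hhi
  rw [ENNReal.toReal_ofReal (Real.exp_pos _).le] at hlo' hhi'
  have hpos := (Real.exp_pos _).trans_le hlo'
  rw [abs_le, Real.le_log_iff_exp_le hpos, Real.log_le_iff_le_exp hpos]
  exact ⟨by simpa [neg_mul] using hlo', hhi'⟩

end expIter

/-- `meanPathSum κ f T x = E_x[Σ_{t<T} f(Φ(t), Φ(t+1))]` for the chain with kernel `κ`. -/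
noncomputable def meanPathSum {X : Type*} [MeasurableSpace X] (κ : Kernel X X)
    (f : X × X → ℝ) : ℕ → X → ℝ
  | 0 => fun _ => 0
  | T + 1 => fun x => ∫ y, f (x, y) + meanPathSum κ f T y ∂(κ x)

section meanPathSum

variable {X : Type*} [MeasurableSpace X] {κ : Kernel X X} [IsSFiniteKernel κ]
  {μ : Measure X} [SFinite μ] {f : X × X → ℝ}

lemma integrable_integral_of_integrable_compProd {g : X × X → ℝ} (hg : Integrable g (μ ⊗ₘ κ)) :
    Integrable (fun x => ∫ y, g (x, y) ∂κ x) μ := by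
  rw [Measure.compProd] at hg
  simpa using hg.integral_compProd (κ := Kernel.const Unit μ) (η := Kernel.prodMkLeft Unit κ)
    (a := ())

lemma integrable_snd_compProd_of_comp_eq (hinv : κ ∘ₘ μ = μ) {g : X → ℝ}
    (hg : Integrable g μ) : Integrable (fun p : X × X => g p.2) (μ ⊗ₘ κ) := by
  rw [← hinv] at hg
  exact (Measure.integrable_compProd_snd_iff hg.1).2 hg

lemma integral_snd_compProd_of_comp_eq (hinv : κ ∘ₘ μ = μ) {g : X → ℝ}
    (hg : AEStronglyMeasurable g μ) : ∫ p, g p.2 ∂(μ ⊗ₘ κ) = ∫ x, g x ∂μ := by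
  rw [← hinv] at hg
  conv_rhs => rw [← hinv, ← Measure.snd_compProd, Measure.snd]
  rw [integral_map measurable_snd.aemeasurable (by rwa [← Measure.snd, Measure.snd_compProd])]

lemma integrable_meanPathSum (hinv : κ ∘ₘ μ = μ) (hfi : Integrable f (μ ⊗ₘ κ)) (T : ℕ) :
    Integrable (meanPathSum κ f T) μ := by
  induction T with
  | zero => exact integrable_zero _ _ _
  | succ T ih =>
    exact integrable_integral_of_integrable_compProd
      (hfi.add (integrable_snd_compProd_of_comp_eq hinv ih))

lemma integral_meanPathSum (hinv : κ ∘ₘ μ = μ) (hfi : Integrable f (μ ⊗ₘ κ)) (T : ℕ) :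
    ∫ x, meanPathSum κ f T x ∂μ = T * ∫ p, f p ∂(μ ⊗ₘ κ) := by
  induction T with
  | zero => simp [meanPathSum]
  | succ T ih =>
    have hu := integrable_meanPathSum hinv hfi T
    have hsum := hfi.add (integrable_snd_compProd_of_comp_eq hinv hu)
    calc ∫ x, meanPathSum κ f (T + 1) x ∂μ
        = ∫ p, f p + meanPathSum κ f T p.2 ∂(μ ⊗ₘ κ) := (Measure.integral_compProd hsum).symm
      _ = ∫ p, f p ∂(μ ⊗ₘ κ) + ∫ x, meanPathSum κ f T x ∂μ := by
        rw [integral_add hfi (integrable_snd_compProd_of_comp_eq hinv hu),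
          integral_snd_compProd_of_comp_eq hinv hu.1]
      _ = (T + 1 : ℕ) * ∫ p, f p ∂(μ ⊗ₘ κ) := by
        rw [ih]
        push_cast
        ring

end meanPathSum

/-- The kernel `P̌(x, dy) = m(x, y) P(x, dy)`. -/
noncomputable def tiltedKernel {X : Type*} [MeasurableSpace X] (P : Kernel X X)
    [IsSFiniteKernel P] (m : X × X → ℝ) : Kernel X X :=
  P.withDensity fun x y => ENNReal.ofReal (m (x, y))

instance {X : Type*} [MeasurableSpace X] (P : Kernel X X) [IsSFiniteKernel P]
    (m : X × X → ℝ) : IsSFiniteKernel (tiltedKernel P m) :=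
  Kernel.IsSFiniteKernel.withDensity P (f := fun x y => ENNReal.ofReal (m (x, y)))
    fun _ _ => ENNReal.ofReal_ne_top

section tiltedKernel

variable {X : Type*} [MeasurableSpace X] {P : Kernel X X} [IsSFiniteKernel P]
  {m G : X × X → ℝ}

lemma tiltedKernel_apply (hm : Measurable m) (x : X) :
    tiltedKernel P m x = (P x).withDensity fun y => ENNReal.ofReal (m (x, y)) :=
  Kernel.withDensity_apply P (f := fun x y => ENNReal.ofReal (m (x, y)))
    hm.ennreal_ofReal x

lemma isProbabilityMeasure_tiltedKernel_apply (hm : Measurable m) {x : X}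
    (hx : ∫⁻ y, ENNReal.ofReal (m (x, y)) ∂(P x) = 1) :
    IsProbabilityMeasure (tiltedKernel P m x) := by
  constructor
  rw [tiltedKernel_apply hm, withDensity_apply _ MeasurableSet.univ, setLIntegral_univ, hx]

lemma eq_compProd_tiltedKernel (hm : Measurable m) {pic : Measure X} [SFinite pic]
    {Γ : Measure (X × X)}
    (hΓ : ∀ s : Set (X × X), MeasurableSet s →
      Γ s = ∫⁻ x, ∫⁻ y, s.indicator (fun _ => (1 : ℝ≥0∞)) (x, y)
        * ENNReal.ofReal (m (x, y)) ∂(P x) ∂pic) :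
    Γ = pic ⊗ₘ tiltedKernel P m := by
  ext s hs
  rw [hΓ s hs, Measure.compProd_apply hs]
  refine lintegral_congr fun x => ?_
  rw [tiltedKernel_apply hm, withDensity_apply _ (measurable_prodMk_left hs),
    ← lintegral_indicator (measurable_prodMk_left hs)]
  refine lintegral_congr fun y => ?_
  by_cases hxy : (x, y) ∈ s <;> simp [hxy]

lemma lintegral_tiltedKernel_exp_sub_log_le (hm : Measurable m) (hG : Measurable G) {h : X → ℝ≥0∞} (hh : Measurable h) (x : X) :
    ∫⁻ y, ENNReal.ofReal (Real.exp (G (x, y) - Real.log (m (x, y)))) * h y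
        ∂(tiltedKernel P m x)
      ≤ ∫⁻ y, ENNReal.ofReal (Real.exp (G (x, y))) * h y ∂(P x) := by
  have hdens : Measurable fun y => ENNReal.ofReal (m (x, y)) := by fun_prop
  have hint : Measurable fun y =>
      ENNReal.ofReal (Real.exp (G (x, y) - Real.log (m (x, y)))) * h y := by fun_prop
  rw [tiltedKernel_apply hm, lintegral_withDensity_eq_lintegral_mul _ hdens hint]
  refine lintegral_mono fun y => ?_
  simp only [Pi.mul_apply, ← mul_assoc]
  exact mul_le_mul_left (ofReal_mul_ofReal_exp_sub_log_le _ _) _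

lemma ae_ofReal_exp_meanPathSum_le_expIter (hm : Measurable m) {μ : Measure X} [SFinite μ]
    (hinv : tiltedKernel P m ∘ₘ μ = μ)
    (hprob : ∀ᵐ x ∂μ, IsProbabilityMeasure (tiltedKernel P m x)) (hG : Measurable G)
    (hfi : Integrable (fun p => G p - Real.log (m p)) (μ ⊗ₘ tiltedKernel P m)) (T : ℕ) :
    ∀ᵐ x ∂μ, ENNReal.ofReal (Real.exp
      (meanPathSum (tiltedKernel P m) (fun p => G p - Real.log (m p)) T x)) ≤ expIter P G T x := by
  induction T with
  | zero => exact ae_of_all _ fun x => by simp [meanPathSum, expIter]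
  | succ T ih =>
    set κ := tiltedKernel P m
    set u := meanPathSum κ (fun p => G p - Real.log (m p)) T
    have hsum := hfi.add (integrable_snd_compProd_of_comp_eq hinv
      (integrable_meanPathSum hinv hfi T))
    have hnext : ∀ᵐ x ∂μ, ∀ᵐ y ∂(κ x), ENNReal.ofReal (Real.exp (u y)) ≤ expIter P G T y :=
      Measure.ae_ae_of_ae_comp (hinv.symm ▸ ih)
    have hint : ∀ᵐ x ∂μ, Integrable (fun y => G (x, y) - Real.log (m (x, y)) + u y) (κ x) :=
      ((Measure.integrable_compProd_iff hsum.1).1 hsum).1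
    filter_upwards [hprob, hnext, hint] with x hx hxnext hxint
    calc ENNReal.ofReal (Real.exp (meanPathSum κ (fun p => G p - Real.log (m p)) (T + 1) x))
        ≤ ∫⁻ y, ENNReal.ofReal (Real.exp (G (x, y) - Real.log (m (x, y)) + u y)) ∂(κ x) :=
          ofReal_exp_integral_le_lintegral _ hxint
      _ ≤ ∫⁻ y, ENNReal.ofReal (Real.exp (G (x, y) - Real.log (m (x, y)))) * expIter P G T y
            ∂(κ x) := by
          refine lintegral_mono_ae (hxnext.mono fun y hy => ?_)
          rw [Real.exp_add, ENNReal.ofReal_mul (Real.exp_pos _).le]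
          gcongr
      _ ≤ expIter P G (T + 1) x :=
          lintegral_tiltedKernel_exp_sub_log_le hm hG (measurable_expIter P hG T) x

end tiltedKernel

section entropyBound

variable {X : Type*} [MeasurableSpace X] {P : Kernel X X} [IsMarkovKernel P]
  {m : X × X → ℝ} {μ : Measure X} [IsProbabilityMeasure μ] {G : X × X → ℝ} {c : ℝ}

lemma mul_integral_sub_log_le_integral_log_expIter (hm : Measurable m)
    (hinv : tiltedKernel P m ∘ₘ μ = μ)
    (hprob : ∀ᵐ x ∂μ, IsProbabilityMeasure (tiltedKernel P m x))
    (hG : Measurable G) (hGc : ∀ p, |G p| ≤ c)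
    (hfi : Integrable (fun p => G p - Real.log (m p)) (μ ⊗ₘ tiltedKernel P m)) (T : ℕ) :
    T * ∫ p, G p - Real.log (m p) ∂(μ ⊗ₘ tiltedKernel P m)
      ≤ ∫ x, Real.log (expIter P G T x).toReal ∂μ := by
  have hlog_int : Integrable (fun x => Real.log (expIter P G T x).toReal) μ :=
    .of_bound (measurable_expIter P hG T).ennreal_toReal.log.aestronglyMeasurable (c * T)
      (ae_of_all _ (abs_log_toReal_expIter_le P hGc T))
  rw [← integral_meanPathSum hinv hfi]
  refine integral_mono_ae (integrable_meanPathSum hinv hfi T) hlog_int ?_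
  filter_upwards [ae_ofReal_exp_meanPathSum_le_expIter hm hinv hprob hG hfi T] with x hx
  have hexp := ENNReal.toReal_mono (expIter_ne_top P (fun p => le_of_abs_le (hGc p)) T x) hx
  rw [ENNReal.toReal_ofReal (Real.exp_pos _).le] at hexp
  exact (Real.le_log_iff_exp_le ((Real.exp_pos _).trans_le hexp)).2 hexp

lemma integral_sub_log_le_of_tendsto (hm : Measurable m)
    (hinv : tiltedKernel P m ∘ₘ μ = μ)
    (hprob : ∀ᵐ x ∂μ, IsProbabilityMeasure (tiltedKernel P m x))
    (hG : Measurable G) (hGc : ∀ p, |G p| ≤ c)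
    (hfi : Integrable (fun p => G p - Real.log (m p)) (μ ⊗ₘ tiltedKernel P m)) {L : ℝ}
    (hL : ∀ x, Tendsto (fun T : ℕ => (T : ℝ)⁻¹ * Real.log ((expIter P G T x).toReal))
      atTop (nhds L)) :
    ∫ p, G p - Real.log (m p) ∂(μ ⊗ₘ tiltedKernel P m) ≤ L := by
  have hlim : Tendsto (fun T : ℕ => ∫ x, (T : ℝ)⁻¹ * Real.log (expIter P G T x).toReal ∂μ)
      atTop (nhds (∫ _, L ∂μ)) := by
    refine tendsto_integral_filter_of_dominated_convergence (fun _ => c)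
      (Eventually.of_forall fun T =>
        ((measurable_expIter P hG T).ennreal_toReal.log.const_mul _).aestronglyMeasurable)
      ((eventually_ge_atTop 1).mono fun T hT => ae_of_all _ fun x => ?_)
      (integrable_const c) (ae_of_all _ hL)
    have hTpos : (0 : ℝ) < T := by exact_mod_cast hT
    rw [Real.norm_eq_abs, abs_mul, abs_inv, Nat.abs_cast, inv_mul_le_iff₀ hTpos, mul_comm]
    exact abs_log_toReal_expIter_le P hGc T x
  rw [integral_const, probReal_univ, one_smul] at hlim
  refine ge_of_tendsto hlim ((eventually_ge_atTop 1).mono fun T hT => ?_)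
  have hTpos : (0 : ℝ) < T := by exact_mod_cast hT
  rw [integral_const_mul, le_inv_mul_iff₀ hTpos]
  exact mul_integral_sub_log_le_integral_log_expIter hm hinv hprob hG hGc hfi T

end entropyBound

lemma EReal.coe_le_coe_add_coe_ennreal_sub {x y b : ℝ} {a : ℝ≥0∞}
    (h : a ≠ ⊤ → x ≤ y + (a.toReal - b)) : (x : EReal) ≤ y + a - b := by
  rcases eq_or_ne a ⊤ with rfl | ha
  · simp
  · rw [← EReal.coe_ennreal_toReal ha, ← EReal.coe_add, ← EReal.coe_sub, EReal.coe_le_coe_iff]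
    linarith [h ha]

theorem stmt17_general {X : Type*} [MeasurableSpace X]
    (P : Kernel X X) [IsMarkovKernel P]
    (pic : Measure X) [IsProbabilityMeasure pic]
    (m : X × X → ℝ) (hm : Measurable m)
    (hmark : ∀ᵐ x ∂pic, ∫⁻ y, ENNReal.ofReal (m (x, y)) ∂(P x) = 1)
    (Γ : Measure (X × X)) [IsProbabilityMeasure Γ]
    (hΓ : ∀ s : Set (X × X), MeasurableSet s →
      Γ s = ∫⁻ x, ∫⁻ y,
        Set.indicator s (fun _ => (1 : ℝ≥0∞)) (x, y)
          * ENNReal.ofReal (m (x, y)) ∂(P x) ∂pic)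
    (hsnd : Γ.snd = pic)
    (hMneg : ∫⁻ p, ENNReal.ofReal (-Real.log (m p)) ∂Γ < ⊤)
    (Lam : (X × X → ℝ) → ℝ)
    (hLam : ∀ G : X × X → ℝ, Measurable G → (∃ c : ℝ, ∀ p, |G p| ≤ c) →
      ∀ x, Tendsto (fun T : ℕ => (T : ℝ)⁻¹ * Real.log ((expIter P G T x).toReal))
        atTop (nhds (Lam G))) :
    (∀ G : X × X → ℝ, Measurable G → (∃ c : ℝ, ∀ p, |G p| ≤ c) →
      ((∫ p, G p ∂Γ : ℝ) : EReal)
        ≤ (Lam G : EReal)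
          + ((∫⁻ p, ENNReal.ofReal (Real.log (m p)) ∂Γ : ℝ≥0∞) : EReal)
          - (((∫⁻ p, ENNReal.ofReal (-Real.log (m p)) ∂Γ).toReal : ℝ) : EReal))
    ∧ (⨆ (G : {G : X × X → ℝ // Measurable G ∧ ∃ c : ℝ, ∀ p, |G p| ≤ c}),
          (((∫ p, G.1 p ∂Γ) - Lam G.1 : ℝ) : EReal))
        ≤ ((∫⁻ p, ENNReal.ofReal (Real.log (m p)) ∂Γ : ℝ≥0∞) : EReal)
          - (((∫⁻ p, ENNReal.ofReal (-Real.log (m p)) ∂Γ).toReal : ℝ) : EReal) := by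
  have hΓκ : Γ = pic ⊗ₘ tiltedKernel P m := eq_compProd_tiltedKernel hm hΓ
  have hinv : tiltedKernel P m ∘ₘ pic = pic := by rw [← Measure.snd_compProd, ← hΓκ, hsnd]
  have hprob : ∀ᵐ x ∂pic, IsProbabilityMeasure (tiltedKernel P m x) :=
    hmark.mono fun x hx => isProbabilityMeasure_tiltedKernel_apply hm hx
  have hbound : ∀ G : X × X → ℝ, Measurable G → (∃ c : ℝ, ∀ p, |G p| ≤ c) →
      ∫⁻ p, ENNReal.ofReal (Real.log (m p)) ∂Γ ≠ ⊤ →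
      ∫ p, G p ∂Γ ≤ Lam G + ((∫⁻ p, ENNReal.ofReal (Real.log (m p)) ∂Γ).toReal
        - (∫⁻ p, ENNReal.ofReal (-Real.log (m p)) ∂Γ).toReal) := by
    rintro G hG ⟨c, hGc⟩ hpos
    have hM : Integrable (fun p => Real.log (m p)) Γ :=
      integrable_of_lintegral_ofReal_ne_top hm.log.aestronglyMeasurable hpos hMneg.ne
    have hGi : Integrable G Γ := .of_bound hG.aestronglyMeasurable c (ae_of_all _ hGc)
    have key := integral_sub_log_le_of_tendsto hm hinv hprob hG hGc (hΓκ ▸ hGi.sub hM)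
      (hLam G hG ⟨c, hGc⟩)
    rw [← hΓκ, integral_sub hGi hM, integral_eq_lintegral_pos_part_sub_lintegral_neg_part hM]
      at key
    linarith
  refine ⟨fun G hG hGb => EReal.coe_le_coe_add_coe_ennreal_sub (hbound G hG hGb),
    iSup_le fun G => ?_⟩
  simpa only [EReal.coe_zero, zero_add] using EReal.coe_le_coe_add_coe_ennreal_sub (y := 0)
    fun h => by linarith [hbound G.1 G.2.1 G.2.2 h]

/-- Upper bound of the bivariate convex dual by relative entropy: if `Γ` is a
probability measure on `X × X` with both marginals `π̌`, of the form
`Γ(dx,dy) = π̌(dx) m(x,y) P(x,dy)` with `Γ(M₋) < ∞` for `M = log m`, then for every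
bounded measurable `G`, `Λ(G) ≥ ⟨Γ, G − M⟩`, and consequently
`Λ*(Γ) = sup_G (⟨Γ,G⟩ − Λ(G)) ≤ ⟨Γ, M⟩ = H(Γ ∥ π̌ ⊙ P)`. -/
theorem stmt17 {X : Type*} [MeasurableSpace X]
    (P : Kernel X X) [IsMarkovKernel P]
    (pic : Measure X) [IsProbabilityMeasure pic]
    (m : X × X → ℝ) (hm : Measurable m) (hm0 : ∀ p, 0 ≤ m p)
    (hmark : ∀ᵐ x ∂pic, ∫⁻ y, ENNReal.ofReal (m (x, y)) ∂(P x) = 1)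
    (Γ : Measure (X × X)) [IsProbabilityMeasure Γ]
    (hΓ : ∀ s : Set (X × X), MeasurableSet s →
      Γ s = ∫⁻ x, ∫⁻ y,
        Set.indicator s (fun _ => (1 : ℝ≥0∞)) (x, y)
          * ENNReal.ofReal (m (x, y)) ∂(P x) ∂pic)
    (hfst : Γ.fst = pic) (hsnd : Γ.snd = pic)
    (hmpos : ∀ᵐ p ∂Γ, 0 < m p)
    (hMneg : ∫⁻ p, ENNReal.ofReal (-Real.log (m p)) ∂Γ < ⊤)
    (Lam : (X × X → ℝ) → ℝ)
    (hLam : ∀ G : X × X → ℝ, Measurable G → (∃ c : ℝ, ∀ p, |G p| ≤ c) →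
      ∀ x, Tendsto (fun T : ℕ => (T : ℝ)⁻¹ * Real.log ((expIter P G T x).toReal))
        atTop (nhds (Lam G))) :
    (∀ G : X × X → ℝ, Measurable G → (∃ c : ℝ, ∀ p, |G p| ≤ c) →
      ((∫ p, G p ∂Γ : ℝ) : EReal)
        ≤ (Lam G : EReal)
          + ((∫⁻ p, ENNReal.ofReal (Real.log (m p)) ∂Γ : ℝ≥0∞) : EReal)
          - (((∫⁻ p, ENNReal.ofReal (-Real.log (m p)) ∂Γ).toReal : ℝ) : EReal))
    ∧ (⨆ (G : {G : X × X → ℝ // Measurable G ∧ ∃ c : ℝ, ∀ p, |G p| ≤ c}),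
          (((∫ p, G.1 p ∂Γ) - Lam G.1 : ℝ) : EReal))
        ≤ ((∫⁻ p, ENNReal.ofReal (Real.log (m p)) ∂Γ : ℝ≥0∞) : EReal)
          - (((∫⁻ p, ENNReal.ofReal (-Real.log (m p)) ∂Γ).toReal : ℝ) : EReal) :=
  stmt17_general P pic m hm hmark Γ hΓ hsnd hMneg Lam hLam
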